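/- arXiv:1906.07250 — 3 statements merged into one kernel-verified Lean document; each statement's English description precedes it below -/
import Mathlib

section
/- For λ = 2cos(π/q) with integer q ≥ 3, and U = [[λ, -1], [1, 0]], the vectors w_i = U^i (1,0)^T satisfy w_0 = (1,0)^T, w_1 = (λ,1)^T, w_{q-2} = (1,λ)^T, and w_{q-1} = (0,1)^T. -/
/-!
With `θ = π / q` and `λ = 2 cos θ`, the recurrence `w_{i+1} = U w_i` is the three-term recurrence
`s_{i+1} = 2 cos θ · s_i - s_{i-1}` of `s_i = sin (i θ) / sin θ`, so `w_i = (s_{i+1}, s_i)`.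
Since `q θ = π`, the reflection `sin (π - x) = sin x` gives `s_q = 0`, `s_{q-1} = s_1 = 1` and
`s_{q-2} = s_2 = sin 2θ / sin θ = λ`.
-/

open Real Matrix

lemma companion_mulVec (c a b : ℝ) : !![c, -1; 1, 0] *ᵥ ![a, b] = ![c * a - b, a] := by
  ext i
  fin_cases i <;> simp [vecHead, vecTail]
  ring

lemma sin_add_two_mul (x θ : ℝ) : sin (x + 2 * θ) = 2 * cos θ * sin (x + θ) - sin x := by
  have := two_mul_sin_mul_cos (x + θ) θ
  rw [add_sub_cancel_right, add_assoc, ← two_mul] at this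
  linarith

lemma pow_mulVec_eq_sin_div_sin {θ : ℝ} (hθ : sin θ ≠ 0) (n : ℕ) :
    (!![2 * cos θ, -1; 1, 0] ^ n) *ᵥ ![1, 0] =
      ![sin ((n + 1 : ℕ) * θ) / sin θ, sin (n * θ) / sin θ] := by
  induction n with
  | zero => simp [hθ]
  | succ n ih =>
    rw [pow_succ', ← mulVec_mulVec, ih, companion_mulVec]
    congr 2
    push_cast
    rw [show ((n : ℝ) + 1 + 1) * θ = n * θ + 2 * θ by ring, sin_add_two_mul, add_one_mul]
    ring

lemma sin_pi_div_natCast_ne_zero {q : ℕ} (hq : 2 ≤ q) : sin (π / q) ≠ 0 := by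
  have hq' : (1 : ℝ) < q := by exact_mod_cast hq
  exact (sin_pos_of_pos_of_lt_pi (by positivity) (div_lt_self pi_pos hq')).ne'

lemma sin_natSub_mul_pi_div {q n : ℕ} (hn : n ≤ q) :
    sin ((q - n : ℕ) * (π / q)) = sin (n * (π / q)) := by
  rcases eq_or_ne q 0 with rfl | hq
  · simp
  rw [Nat.cast_sub hn, sub_mul, mul_div_cancel₀ π (Nat.cast_ne_zero.mpr hq), sin_pi_sub]

theorem stmt_0 (q : ℕ) (hq : 3 ≤ q)
    (lam : ℝ) (hlam : lam = 2 * Real.cos (Real.pi / q))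
    (U : Matrix (Fin 2) (Fin 2) ℝ) (hU : U = !![lam, -1; 1, 0])
    (w : ℕ → Fin 2 → ℝ) (hw : ∀ i, w i = (U ^ i).mulVec ![1, 0]) :
    w 0 = ![1, 0] ∧ w 1 = ![lam, 1] ∧ w (q - 2) = ![1, lam] ∧ w (q - 1) = ![0, 1] := by
  set θ := π / q
  have hsin : sin θ ≠ 0 := sin_pi_div_natCast_ne_zero (by omega)
  have hw_sin (i : ℕ) : w i = ![sin ((i + 1 : ℕ) * θ) / sin θ, sin (i * θ) / sin θ] := by
    rw [hw, hU, hlam, pow_mulVec_eq_sin_div_sin hsin]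
  have hsin_one : sin ((1 : ℕ) * θ) / sin θ = 1 := by
    rw [Nat.cast_one, one_mul, div_self hsin]
  have hsin_two : sin ((2 : ℕ) * θ) / sin θ = lam := by
    rw [Nat.cast_two, sin_two_mul, hlam]
    field_simp
  refine ⟨?_, ?_, ?_, ?_⟩
  · rw [hw_sin, hsin_one]
    simp
  · rw [hw_sin, hsin_two, hsin_one]
  · rw [hw_sin, show q - 2 + 1 = q - 1 by omega, sin_natSub_mul_pi_div (by omega : 1 ≤ q),
      sin_natSub_mul_pi_div (by omega : 2 ≤ q), hsin_one, hsin_two]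
  · rw [hw_sin, show q - 1 + 1 = q - 0 by omega, sin_natSub_mul_pi_div (Nat.zero_le q),
      sin_natSub_mul_pi_div (by omega : 1 ≤ q), hsin_one]
    simp
end

section
/- Each vector w_i = U^i (1,0)^T lies on the ellipse x^2 − λ_q x y + y^2 = 1, for 0 ≤ i ≤ q-1. -/
open Real Matrix

theorem stmt_3 (q : ℕ) (hq : 3 ≤ q)
    (lam : ℝ) (hlam : lam = 2 * Real.cos (Real.pi / q))
    (U : Matrix (Fin 2) (Fin 2) ℝ) (hU : U = !![lam, -1; 1, 0])
    (w : ℕ → Fin 2 → ℝ) (hw : ∀ i, w i = (U ^ i).mulVec ![1, 0]) :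
    ∀ i, i ≤ q - 1 →
      (w i 0) ^ 2 - lam * (w i 0) * (w i 1) + (w i 1) ^ 2 = 1 := by
  have key : ∀ i, (w i 0) ^ 2 - lam * (w i 0) * (w i 1) + (w i 1) ^ 2 = 1 := by
    intro i
    induction i with
    | zero => simp [hw 0]
    | succ n ih =>
      have h0 : w (n + 1) 0 = lam * w n 0 - w n 1 := by
        rw [hw (n + 1), pow_succ', ← Matrix.mulVec_mulVec, ← hw n, hU]
        simp [Matrix.mulVec, dotProduct, Fin.sum_univ_two]
        ring
      have h1 : w (n + 1) 1 = w n 0 := by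
        rw [hw (n + 1), pow_succ', ← Matrix.mulVec_mulVec, ← hw n, hU]
        simp [Matrix.mulVec, dotProduct, Fin.sum_univ_two]
      rw [h0, h1]
      nlinarith [ih]
  intro i _
  exact key i
end

section
/- For all i with 0 ≤ i ≤ q-2, the transpose of M_i equals M_{q-2-i}, where M_i = U^i T with T = [[1, λ_q],[0,1]]. -/
/-!
With `S` the Chebyshev polynomials normalised by `S (n + 2) = X * S (n + 1) - S n`, the matrix
`U ^ i * T` has entries `S i, S (i + 1); S (i - 1), S i` evaluated at `λ`, by induction on `i`.
Since `S k (2 cos θ) * sin θ = sin ((k + 1) θ)`, the choice `θ = π / q` gives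
`S (q - 2 - k) (λ_q) = S k (λ_q)`, which turns the transpose of `M i` into `M (q - 2 - i)`.
-/

open Real Matrix

open Polynomial Chebyshev

theorem companion_pow_mul_shear_eq_S_eval {R : Type*} [CommRing R] (x : R) (n : ℕ) :
    !![x, -1; 1, 0] ^ n * !![1, x; 0, 1] =
      !![(S R n).eval x, (S R (n + 1)).eval x; (S R (n - 1)).eval x, (S R n).eval x] := by
  induction n with
  | zero => simp [S_zero, S_one, S_neg_one]
  | succ n ih =>
    rw [pow_succ', mul_assoc, ih, Nat.cast_succ, add_sub_cancel_right, add_assoc,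
      one_add_one_eq_two, S_add_two, S_add_one, Matrix.mul_fin_two]
    simp only [eval_sub, eval_mul, eval_X]
    ext i j
    fin_cases i <;> fin_cases j <;> simp <;> ring

theorem S_eval_two_mul_cos_pi_div_sub (q : ℕ) (hq : 2 ≤ q) (k : ℤ) :
    (S ℝ (q - 2 - k)).eval (2 * cos (π / q)) = (S ℝ k).eval (2 * cos (π / q)) := by
  have hq' : (2 : ℝ) ≤ q := by exact_mod_cast hq
  have hsin : sin (π / q) ≠ 0 :=
    (sin_pos_of_pos_of_lt_pi (by positivity) (div_lt_self pi_pos (by linarith))).ne'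
  apply mul_right_cancel₀ hsin
  rw [S_two_mul_real_cos, S_two_mul_real_cos, ← sin_pi_sub]
  congr 1
  push_cast
  field_simp
  ring

theorem stmt_4 (q : ℕ) (hq : 3 ≤ q)
    (lam : ℝ) (hlam : lam = 2 * Real.cos (Real.pi / q))
    (U T : Matrix (Fin 2) (Fin 2) ℝ)
    (hU : U = !![lam, -1; 1, 0]) (hT : T = !![1, lam; 0, 1])
    (M : ℕ → Matrix (Fin 2) (Fin 2) ℝ) (hM : ∀ i, M i = U ^ i * T) :
    ∀ i, i ≤ q - 2 → (M i)ᵀ = M (q - 2 - i) := by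
  intro i hi
  subst hlam hU hT
  simp only [hM, companion_pow_mul_shear_eq_S_eval]
  ext a b
  fin_cases a <;> fin_cases b <;> simp <;>
    rw [← S_eval_two_mul_cos_pi_div_sub q (by omega)] <;> congr 2 <;> omega
end
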